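/- For n ≥ 2 and non-negative integers r1 < r2 ≤ m, the star product of the Berman code Ber_n^{r1}(m) with the Dual Berman code B_n^{r2}(m) equals the full space F_2^{n^m}. -/

import Mathlib

open scoped BigOperators

/-- The `l`-th block (of length `n^m`) of a vector of length `n^(m+1)`,
where the first coordinate of the index tuple selects the block. -/
def blockAt (n m : ℕ) (l : Fin n) (v : (Fin (m + 1) → Fin n) → ZMod 2) :
    (Fin m → Fin n) → ZMod 2 :=
  fun j => v (Fin.cons l j)

/-- Berman code `Ber_n^r(m) ⊆ F_2^{n^m}`, coordinates indexed by `H^m` with `H = Fin n`.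
`Ber_n^m(m) = {0}`, `Ber_n^0(m)` is the single parity-check code, and for `1 ≤ r`,
a codeword is a concatenation `(v_0|…|v_{n-1})` with each block in `Ber_n^{r-1}(m-1)`
and the sum of the blocks in `Ber_n^r(m-1)`. -/
def Ber (n : ℕ) : ℕ → (m : ℕ) → Set ((Fin m → Fin n) → ZMod 2)
  | _, 0 => {0}
  | 0, (m + 1) => {c | ∑ i, c i = 0}
  | (r + 1), (m + 1) =>
      {v | (∀ l : Fin n, blockAt n m l v ∈ Ber n r m) ∧
        (fun j => ∑ l : Fin n, v (Fin.cons l j)) ∈ Ber n (r + 1) m}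

/-- Dual Berman code `B_n^r(m) ⊆ F_2^{n^m}`.
`B_n^m(m)` is the full space, `B_n^0(m)` is the repetition code, and for `1 ≤ r`,
a codeword is `(u+u_0|…|u+u_{n-2}|u)` with each `u_l ∈ B_n^{r-1}(m-1)` and `u ∈ B_n^r(m-1)`. -/
def DBer (n : ℕ) : ℕ → (m : ℕ) → Set ((Fin m → Fin n) → ZMod 2)
  | _, 0 => Set.univ
  | 0, (m + 1) => {c | ∃ a : ZMod 2, c = fun _ => a}
  | (r + 1), (m + 1) =>
      {v | ∃ u ∈ DBer n (r + 1) m, ∃ w : Fin n → ((Fin m → Fin n) → ZMod 2),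
        (∀ l, w l ∈ DBer n r m) ∧
        (∀ l : Fin n, blockAt n m l v = if l.val = n - 1 then u else u + w l)}

/-- Star product of two codes: the span of all coordinatewise products. -/
def starProd {ι : Type*} (C D : Set (ι → ZMod 2)) : Submodule (ZMod 2) (ι → ZMod 2) :=
  Submodule.span (ZMod 2) {x | ∃ c ∈ C, ∃ d ∈ D, x = c * d}

/-- Dual code w.r.t. the standard bilinear form. -/
def dualCode {ι : Type*} [Fintype ι] (C : Set (ι → ZMod 2)) : Set (ι → ZMod 2) :=
  {x | ∀ c ∈ C, ∑ i, x i * c i = 0}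

/-- Partial order on tuples: `j ⪯ i` iff `supp(j) ⊆ supp(i)` and `j` agrees with `i` on
`supp(j)`. -/
def preceq {n m : ℕ} (j i : Fin m → Fin n) : Prop :=
  ∀ s, (j s).val ≠ 0 → j s = i s

instance {n m : ℕ} (j i : Fin m → Fin n) : Decidable (preceq j i) := by
  unfold preceq; infer_instance

/-- Hamming weight of a tuple in `H^m`: the number of nonzero entries. -/
def tupleWt {n m : ℕ} (j : Fin m → Fin n) : ℕ :=
  (Finset.univ.filter fun s => (j s).val ≠ 0).card

/-- The vector `c_m(i')`, the indicator of `{i : i ⪯ i'}`. -/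
def cm {n m : ℕ} (i' : Fin m → Fin n) : (Fin m → Fin n) → ZMod 2 :=
  fun i => if preceq i i' then 1 else 0

/-- The vector `d_m(i')`, the indicator of `{i : i ⪰ i'}`. -/
def dm {n m : ℕ} (i' : Fin m → Fin n) : (Fin m → Fin n) → ZMod 2 :=
  fun i => if preceq i' i then 1 else 0

/-- Standard basis vector of `F_2^{n^m}` at coordinate `v`. -/
def eVec {n m : ℕ} (v : Fin m → Fin n) : (Fin m → Fin n) → ZMod 2 :=
  fun i => if i = v then 1 else 0

/-!
For `tupleWt b ≥ r₁ + 1` the indicator `cm b` of `{i ⪯ b}` lies in `Ber n r₁ m`, and for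
`tupleWt a ≤ r₂` the indicator `dm a` of `{i ⪰ a}` lies in `DBer n r₂ m`; both follow by
induction on `m` from the block recursions. The product `cm b * dm a` is the indicator of the
interval `[a, b]`. Since `r₁ < r₂`, every unit vector `eVec v` is then obtained by triangular
elimination: if `tupleWt v ≤ r₂` use an interval `[v, b]` with
`tupleWt b = max (tupleWt v) (r₁ + 1)`, otherwise an interval `[a, v]` with `tupleWt a = r₂`;
all other points of the interval have weight strictly closer to the band `[r₁ + 1, r₂]`.
-/

open Finset

section Order

variable {n m : ℕ}

def tupleSupport (j : Fin m → Fin n) : Finset (Fin m) :=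
  univ.filter fun s => (j s).val ≠ 0

lemma mem_tupleSupport {j : Fin m → Fin n} {s : Fin m} : s ∈ tupleSupport j ↔ (j s).val ≠ 0 := by
  simp [tupleSupport]

lemma tupleWt_eq_card_tupleSupport (j : Fin m → Fin n) : tupleWt j = #(tupleSupport j) := rfl

lemma preceq_refl (v : Fin m → Fin n) : preceq v v := fun _ _ => rfl

lemma tupleSupport_subset_of_preceq {a b : Fin m → Fin n} (h : preceq a b) :
    tupleSupport a ⊆ tupleSupport b := fun s hs => by
  rw [mem_tupleSupport] at hs ⊢
  exact h s hs ▸ hs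

lemma tupleWt_le_of_preceq {a b : Fin m → Fin n} (h : preceq a b) : tupleWt a ≤ tupleWt b :=
  card_le_card (tupleSupport_subset_of_preceq h)

lemma tupleWt_lt_of_preceq_of_ne {a b : Fin m → Fin n} (h : preceq a b) (hne : a ≠ b) :
    tupleWt a < tupleWt b := by
  refine card_lt_card (_root_.ssubset_iff_subset_ne.2 ⟨tupleSupport_subset_of_preceq h,
    fun hab : tupleSupport a = tupleSupport b => ?_⟩)
  refine hne (funext fun s => ?_)
  by_cases hs : (a s).val ≠ 0
  · exact h s hs
  · have hbs : s ∉ tupleSupport b := hab ▸ mt mem_tupleSupport.1 hs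
    rw [mem_tupleSupport, not_not] at hbs
    exact Fin.ext (by omega)

lemma preceq_of_tupleWt_eq_zero {a : Fin m → Fin n} (h : tupleWt a = 0) (i : Fin m → Fin n) :
    preceq a i := fun _ hs =>
  absurd (card_eq_zero.1 h) (ne_empty_of_mem (mem_tupleSupport.2 hs))

lemma preceq_cons_cons {x y : Fin n} {j i : Fin m → Fin n} :
    preceq (Fin.cons x j : Fin (m + 1) → Fin n) (Fin.cons y i) ↔
      (x.val ≠ 0 → x = y) ∧ preceq j i := by
  simp only [preceq, Fin.forall_fin_succ, Fin.cons_zero, Fin.cons_succ]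

lemma tupleWt_cons (x : Fin n) (j : Fin m → Fin n) :
    tupleWt (Fin.cons x j : Fin (m + 1) → Fin n) = (if x.val ≠ 0 then 1 else 0) + tupleWt j := by
  simp only [tupleWt, card_filter, Fin.sum_univ_succ, Fin.cons_zero, Fin.cons_succ]

lemma exists_below_tupleWt_eq {v : Fin m → Fin n} {w : ℕ} (hw : w ≤ tupleWt v) :
    ∃ a, preceq a v ∧ tupleWt a = w := by
  obtain ⟨T, hTv, hTw⟩ := exists_subset_card_eq hw
  refine ⟨fun s => if s ∈ T then v s else ⟨0, (v s).pos⟩, fun s hs => ?_, ?_⟩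
  · by_contra hsT
    simp_all
  · rw [tupleWt_eq_card_tupleSupport, ← hTw]
    congr 1
    ext s
    by_cases hs : s ∈ T
    · simpa [mem_tupleSupport, hs] using hTv hs
    · simp [mem_tupleSupport, hs]

lemma exists_above_tupleWt_eq (hn : 2 ≤ n) {v : Fin m → Fin n} {w : ℕ} (hvw : tupleWt v ≤ w)
    (hwm : w ≤ m) : ∃ b, preceq v b ∧ tupleWt b = w := by
  obtain ⟨T, hvT, hTw⟩ := exists_superset_card_eq hvw (by simpa using hwm)
  refine ⟨fun s => if s ∈ tupleSupport v then v s else if s ∈ T then ⟨1, hn⟩ else v s,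
    fun s hs => by simp [mem_tupleSupport.2 hs], ?_⟩
  rw [tupleWt_eq_card_tupleSupport, ← hTw]
  congr 1
  ext s
  by_cases hs : s ∈ tupleSupport v
  · have := hvT hs
    simp_all [mem_tupleSupport]
  · by_cases hsT : s ∈ T <;> simp_all [mem_tupleSupport]

end Order

section Codes

variable {n : ℕ}

lemma zero_mem_Ber (r m : ℕ) : (0 : (Fin m → Fin n) → ZMod 2) ∈ Ber n r m := by
  induction m generalizing r with
  | zero => cases r <;> rfl
  | succ m ih =>
    cases r with
    | zero => simp [Ber]
    | succ r =>
      exact ⟨fun _ => ih r, by simp only [Pi.zero_apply, sum_const_zero]; exact ih (r + 1)⟩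

lemma zero_mem_DBer (r m : ℕ) : (0 : (Fin m → Fin n) → ZMod 2) ∈ DBer n r m := by
  induction m generalizing r with
  | zero => cases r <;> trivial
  | succ m ih =>
    cases r with
    | zero => exact ⟨0, rfl⟩
    | succ r =>
      refine ⟨0, ih (r + 1), fun _ => 0, fun _ => ih r, fun _ => ?_⟩
      simp only [add_zero, ite_self]
      rfl

lemma sum_cm_eq_zero {m : ℕ} {b : Fin m → Fin n} (hb : 0 < tupleWt b) : ∑ i, cm b i = 0 := by
  obtain ⟨s, hs⟩ := card_pos.1 hb
  let z : Fin n := ⟨0, (b s).pos⟩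
  have hbz : b s ≠ z := fun h => (mem_tupleSupport.1 hs) (by rw [h])
  -- toggling coordinate `s` between `0` and `b s` is a fixed-point-free involution of `{i ⪯ b}`
  let g (i : Fin m → Fin n) : Fin m → Fin n := Function.update i s (Equiv.swap z (b s) (i s))
  have hcases : ∀ i, preceq i b → i s = z ∨ i s = b s := fun i hi =>
    (eq_or_ne (i s) z).imp_right fun h => hi s fun h0 => h (Fin.ext h0)
  have hg_s : ∀ i, g i s = Equiv.swap z (b s) (i s) := fun i => Function.update_self ..
  have hgg : ∀ i, g (g i) = i := by simp [g]
  have hg_preceq : ∀ i, preceq i b → preceq (g i) b := fun i hi t ht => by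
    by_cases hts : t = s
    · subst hts
      rw [hg_s] at ht ⊢
      rcases hcases i hi with h | h <;> rw [h] at ht ⊢
      · exact Equiv.swap_apply_left _ _
      · exact absurd rfl (Equiv.swap_apply_right z (b t) ▸ ht)
    · simpa [g, Function.update_of_ne hts] using hi t (by simpa [g, hts] using ht)
  have hg : ∀ i, preceq (g i) b ↔ preceq i b := fun i =>
    ⟨fun h => hgg i ▸ hg_preceq _ h, hg_preceq i⟩
  refine sum_ninvolution g (fun i => ?_) (fun i hi => ?_) (fun _ => mem_univ _) (fun i => ?_)
  · simp only [cm, hg]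
    exact ZModModule.add_self _
  · have hib : preceq i b := by
      by_contra h
      simp [cm, h] at hi
    refine fun h => Equiv.swap_apply_ne_self_iff.2 ⟨hbz.symm, hcases i hib⟩ ?_
    rw [← hg_s, h]
  · exact hgg i

lemma blockAt_cm_cons {m : ℕ} (l b₀ : Fin n) (b : Fin m → Fin n) :
    blockAt n m l (cm (Fin.cons b₀ b)) = if l.val ≠ 0 → l = b₀ then cm b else 0 := by
  ext j
  simp only [blockAt, cm, preceq_cons_cons, ite_and, ite_apply, Pi.zero_apply]

lemma blockAt_dm_cons {m : ℕ} (l a₀ : Fin n) (a : Fin m → Fin n) :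
    blockAt n m l (dm (Fin.cons a₀ a)) = if a₀.val ≠ 0 → a₀ = l then dm a else 0 := by
  ext j
  simp only [blockAt, dm, preceq_cons_cons, ite_and, ite_apply, Pi.zero_apply]

lemma card_filter_preceq_fin (b₀ : Fin n) :
    (#(univ.filter fun l : Fin n => l.val ≠ 0 → l = b₀) : ZMod 2) =
      if b₀.val = 0 then 1 else 0 := by
  have hz : 0 < n := b₀.pos
  have hfilter : univ.filter (fun l : Fin n => l.val ≠ 0 → l = b₀) = {⟨0, hz⟩, b₀} := by
    ext l
    simp [Fin.ext_iff, or_iff_not_imp_left]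
  rw [hfilter]
  by_cases h : b₀.val = 0
  · simp [h, Fin.ext_iff]
  · rw [card_pair (fun e => h (by rw [← e])), if_neg h]
    rfl

lemma sum_blockAt_cm_cons {m : ℕ} (b₀ : Fin n) (b : Fin m → Fin n) :
    (fun j => ∑ l : Fin n, cm (Fin.cons b₀ b : Fin (m + 1) → Fin n) (Fin.cons l j)) =
      if b₀.val = 0 then cm b else 0 := by
  ext j
  have hblock (l : Fin n) : cm (Fin.cons b₀ b : Fin (m + 1) → Fin n) (Fin.cons l j) =
      if l.val ≠ 0 → l = b₀ then cm b j else 0 := by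
    simpa only [blockAt, ite_apply, Pi.zero_apply] using congrFun (blockAt_cm_cons l b₀ b) j
  simp only [hblock, sum_ite, sum_const_zero, add_zero, sum_const, nsmul_eq_mul,
    card_filter_preceq_fin, ite_mul, one_mul, zero_mul, ite_apply, Pi.zero_apply]

lemma cm_mem_Ber {m r : ℕ} {b : Fin m → Fin n} (hb : r + 1 ≤ tupleWt b) : cm b ∈ Ber n r m := by
  induction m generalizing r with
  | zero => simp [tupleWt] at hb
  | succ m ih =>
    cases r with
    | zero => exact sum_cm_eq_zero hb
    | succ r =>
      induction b using Fin.consCases with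
      | cons b₀ b =>
      rw [tupleWt_cons] at hb
      refine ⟨fun l => ?_, ?_⟩
      · rw [blockAt_cm_cons]
        split_ifs
        · exact ih (by split_ifs at hb <;> omega)
        · exact zero_mem_Ber r m
      · rw [sum_blockAt_cm_cons]
        split_ifs with h
        · exact ih (by simp [h] at hb; omega)
        · exact zero_mem_Ber (r + 1) m

lemma dm_mem_DBer {m r : ℕ} {a : Fin m → Fin n} (ha : tupleWt a ≤ r) : dm a ∈ DBer n r m := by
  induction m generalizing r with
  | zero => cases r <;> trivial
  | succ m ih =>
    cases r with
    | zero =>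
      refine ⟨1, funext fun i => ?_⟩
      simp [dm, preceq_of_tupleWt_eq_zero (Nat.le_zero.1 ha) i]
    | succ r =>
      induction a using Fin.consCases with
      | cons a₀ a =>
      rw [tupleWt_cons] at ha
      by_cases h₀ : a₀.val = 0
      · -- every block is `dm a`
        refine ⟨dm a, ih (by simpa [h₀] using ha), fun _ => 0, fun _ => zero_mem_DBer r m,
          fun l => ?_⟩
        simp [blockAt_dm_cons, h₀]
      have ha' : tupleWt a ≤ r := by simp [h₀] at ha; omega
      by_cases hlast : a₀.val = n - 1
      · -- only the last block is `dm a`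
        refine ⟨dm a, ih (by omega), fun _ => dm a, fun _ => ih ha', fun l => ?_⟩
        rw [blockAt_dm_cons]
        by_cases hl : l.val = n - 1
        · rw [if_pos fun _ => Fin.ext (hlast.trans hl.symm), if_pos hl]
        · rw [if_neg fun h : a₀.val ≠ 0 → a₀ = l => hl (h h₀ ▸ hlast), if_neg hl,
            ZModModule.add_self]
      · -- only the block `a₀` is `dm a`
        refine ⟨0, zero_mem_DBer (r + 1) m, fun l => if a₀ = l then dm a else 0,
          fun l => ?_, fun l => ?_⟩
        · dsimp only
          split_ifs
          exacts [ih ha', zero_mem_DBer r m]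
        · rw [blockAt_dm_cons]
          by_cases hl : l.val = n - 1
          · rw [if_pos hl, if_neg fun h : a₀.val ≠ 0 → a₀ = l => hlast (h h₀ ▸ hl)]
          · simp [hl, h₀]

end Codes

lemma mem_of_sum_mem_of_forall_ne {ι M S : Type*} [AddCommGroup M] [SetLike S M]
    [AddSubgroupClass S M] {K : S} {s : Finset ι} {f : ι → M} {i : ι} (hi : i ∈ s)
    (hsum : ∑ j ∈ s, f j ∈ K) (hrest : ∀ j ∈ s, j ≠ i → f j ∈ K) : f i ∈ K := by
  classical
  rw [← add_sum_erase s f hi] at hsum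
  simpa using sub_mem hsum (sum_mem fun j hj => hrest j (mem_of_mem_erase hj) (ne_of_mem_erase hj))

lemma mul_mem_starProd {ι : Type*} {C D : Set (ι → ZMod 2)} {c d : ι → ZMod 2} (hc : c ∈ C)
    (hd : d ∈ D) : c * d ∈ starProd C D :=
  Submodule.subset_span ⟨c, hc, d, hd, rfl⟩

section Span

variable {n m : ℕ}

def precIcc (a b : Fin m → Fin n) : Finset (Fin m → Fin n) :=
  univ.filter fun i => preceq a i ∧ preceq i b

lemma cm_mul_dm (a b : Fin m → Fin n) : cm b * dm a = ∑ i ∈ precIcc a b, eVec i := by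
  ext x
  simp [cm, dm, eVec, precIcc, Finset.sum_apply, ← ite_and]

lemma sum_precIcc_eVec_mem_starProd {r₁ r₂ : ℕ} {a b : Fin m → Fin n} (ha : tupleWt a ≤ r₂)
    (hb : r₁ + 1 ≤ tupleWt b) :
    ∑ i ∈ precIcc a b, eVec i ∈ starProd (Ber n r₁ m) (DBer n r₂ m) :=
  cm_mul_dm a b ▸ mul_mem_starProd (cm_mem_Ber hb) (dm_mem_DBer ha)

lemma eVec_mem_starProd {r₁ r₂ : ℕ} (hn : 2 ≤ n) (h₁₂ : r₁ < r₂) (h₂ : r₂ ≤ m)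
    (v : Fin m → Fin n) : eVec v ∈ starProd (Ber n r₁ m) (DBer n r₂ m) := by
  -- induction on the distance of `tupleWt v` from the band `[r₁ + 1, r₂]`
  obtain ⟨d, hd⟩ : ∃ d, (r₁ + 1 - tupleWt v) + (tupleWt v - r₂) = d := ⟨_, rfl⟩
  induction d using Nat.strong_induction_on generalizing v with
  | _ d ih =>
  by_cases hv : tupleWt v ≤ r₂
  · obtain ⟨b, hvb, hb⟩ := exists_above_tupleWt_eq hn (le_max_left (tupleWt v) (r₁ + 1))
      (max_le (hv.trans h₂) (by omega))
    refine mem_of_sum_mem_of_forall_ne (s := precIcc v b) (by simp [precIcc, preceq_refl, hvb])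
      (sum_precIcc_eVec_mem_starProd hv (by omega)) fun i hi hiv => ?_
    simp only [precIcc, mem_filter, mem_univ, true_and] at hi
    have hvi := tupleWt_lt_of_preceq_of_ne hi.1 (Ne.symm hiv)
    have hib := tupleWt_le_of_preceq hi.2
    exact ih _ (by omega) i rfl
  · obtain ⟨a, hav, ha⟩ := exists_below_tupleWt_eq (v := v) (w := r₂) (by omega)
    refine mem_of_sum_mem_of_forall_ne (s := precIcc a v) (by simp [precIcc, preceq_refl, hav])
      (sum_precIcc_eVec_mem_starProd ha.le (by omega)) fun i hi hiv => ?_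
    simp only [precIcc, mem_filter, mem_univ, true_and] at hi
    have hai := tupleWt_le_of_preceq hi.1
    have hiv := tupleWt_lt_of_preceq_of_ne hi.2 hiv
    exact ih _ (by omega) i rfl

end Span

/-- for `n ≥ 2` and `r1 < r2 ≤ m`,
`Ber_n^{r1}(m) ⋆ B_n^{r2}(m) = F_2^{n^m}`. -/
theorem stmt3 (n m r1 r2 : ℕ) (hn : 2 ≤ n) (h12 : r1 < r2) (h2 : r2 ≤ m) :
    (starProd (Ber n r1 m) (DBer n r2 m) : Set ((Fin m → Fin n) → ZMod 2)) = Set.univ := by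
  have heVec (v : Fin m → Fin n) : eVec v = Pi.basisFun (ZMod 2) (Fin m → Fin n) v := by
    ext i
    simp [eVec, Pi.single_apply]
  suffices starProd (Ber n r1 m) (DBer n r2 m) = ⊤ by rw [this, Submodule.top_coe]
  rw [eq_top_iff, ← (Pi.basisFun (ZMod 2) (Fin m → Fin n)).span_eq, Submodule.span_le]
  rintro _ ⟨v, rfl⟩
  exact heVec v ▸ eVec_mem_starProd hn h12 h2 v
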